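/- Let T>0, α∈(1/3,1/2], let (B,𝔹) be an α-Hölder rough path on [0,T] with values in ℝ^r, let ψ:[0,T]→ℝ^r be continuous with ‖ψ‖_∞ := sup_u|ψ_u| < ∞, set Φ_t := ∫_0^t ψ_u du, Y := Φ + B, and 𝕐_{s,t} := 𝔹_{s,t} + ∫_s^t (Φ_{s,v} + B_{s,v})⊗ψ_v dv + Φ_{s,t}⊗B_{s,t} − ∫_s^t ψ_v⊗B_{s,v} dv. Let (Z,Z′) be controlled by B, with Z:[0,T]→L(ℝ^r,ℝ^d) and Z′:[0,T]→L(ℝ^r,L(ℝ^r,ℝ^d)). Then: (i) (Z,Z′) is also controlled by Y, i.e. ‖(s,t) ↦ Z_{s,t} − Z′_s Y_{s,t}‖_{2α,[0,T]} < ∞; (ii) the compensated Riemann sums Σ_k (Z_{t_k} B_{t_k,t_{k+1}} + Z′_{t_k} 𝔹_{t_k,t_{k+1}}) and Σ_k (Z_{t_k} Y_{t_k,t_{k+1}} + Z′_{t_k} 𝕐_{t_k,t_{k+1}}), over partitions 0 = t_0 < ⋯ < t_n = T, converge as the mesh tends to 0, to limits denoted ∫_0^T Z_s dB_s and ∫_0^T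 Z_s dY_s respectively; and (iii) ∫_0^T Z_s dY_s = ∫_0^T Z_s ψ_s ds + ∫_0^T Z_s dB_s. -/

import Mathlib

open scoped BigOperators
open MeasureTheory

noncomputable section

def pairSet {E : Type*} [NormedAddCommGroup E] (β a b : ℝ) (F : ℝ → ℝ → E) : Set ℝ :=
  {x | ∃ s t : ℝ, s ∈ Set.Icc a b ∧ t ∈ Set.Icc a b ∧ x = ‖F s t‖ / |t - s| ^ β}

noncomputable def pSup {E : Type*} [NormedAddCommGroup E] (β a b : ℝ) (F : ℝ → ℝ → E) : ℝ :=
  sSup (pairSet β a b F)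

def incr {E : Type*} [NormedAddCommGroup E] (Z : ℝ → E) : ℝ → ℝ → E := fun s t => Z t - Z s

def tens {r : ℕ} (x y : EuclideanSpace ℝ (Fin r)) : EuclideanSpace ℝ (Fin r × Fin r) :=
  (WithLp.equiv 2 _).symm (fun p => x p.1 * y p.2)

def bapp {r d : ℕ}
    (L : EuclideanSpace ℝ (Fin r) →L[ℝ] EuclideanSpace ℝ (Fin r) →L[ℝ] EuclideanSpace ℝ (Fin d))
    (M : EuclideanSpace ℝ (Fin r × Fin r)) : EuclideanSpace ℝ (Fin d) :=
  ∑ p : Fin r × Fin r, M p • L (EuclideanSpace.single p.1 1) (EuclideanSpace.single p.2 1)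

def Chen {r : ℕ} (T : ℝ) (B : ℝ → EuclideanSpace ℝ (Fin r))
    (𝔹 : ℝ → ℝ → EuclideanSpace ℝ (Fin r × Fin r)) : Prop :=
  ∀ s ∈ Set.Icc 0 T, ∀ u ∈ Set.Icc 0 T, ∀ t ∈ Set.Icc 0 T,
    𝔹 s t - 𝔹 s u - 𝔹 u t = tens (B u - B s) (B t - B u)

def RSConv {E : Type*} [NormedAddCommGroup E] (a b : ℝ) (F : ℝ → ℝ → E) (I : E) : Prop :=
  ∀ η > (0:ℝ), ∃ δ > (0:ℝ), ∀ (n : ℕ) (π : ℕ → ℝ),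
    π 0 = a → π n = b → (∀ k < n, π k < π (k + 1)) →
    (∀ k < n, π (k + 1) - π k < δ) →
    ‖(∑ k ∈ Finset.range n, F (π k) (π (k + 1))) - I‖ < η

/-- `Φ_t = ∫₀ᵗ ψ_u du`. -/
def Phi {r : ℕ} (ψ : ℝ → EuclideanSpace ℝ (Fin r)) : ℝ → EuclideanSpace ℝ (Fin r) :=
  fun t => ∫ u in (0:ℝ)..t, ψ u

/-- The enhanced process `𝕐` of `Y = Φ + B`. -/
def YY {r : ℕ} (𝔹 : ℝ → ℝ → EuclideanSpace ℝ (Fin r × Fin r))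
    (ψ B : ℝ → EuclideanSpace ℝ (Fin r)) : ℝ → ℝ → EuclideanSpace ℝ (Fin r × Fin r) :=
  fun s t => 𝔹 s t
    + (∫ v in s..t, tens ((Phi ψ v - Phi ψ s) + (B v - B s)) (ψ v))
    + tens (Phi ψ t - Phi ψ s) (B t - B s)
    - ∫ v in s..t, tens (ψ v) (B v - B s)

/-! By Chen's relation the compensated germ `Ξ_{s,t} = Z_s B_{s,t} + Z'_s 𝔹_{s,t}` has defect
`Ξ_{s,t} - Ξ_{s,u} - Ξ_{u,t} = -(Z_{s,u} - Z'_s B_{s,u}) B_{u,t} - Z'_{s,u} 𝔹_{u,t}`, which is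
`O(|t-s|^{3α})` with `3α > 1`, so the sewing lemma gives `∫ Z dB`. The germ for `(Y, 𝕐)` exceeds `Ξ` by
`Z_s Φ_{s,t} + Z'_s (𝕐 - 𝔹)_{s,t}`, which is `∫_s^t Z ψ + O(|t-s|^{1+α})` because `Φ` is Lipschitz.
Riemann sums of the additive germ `∫_s^t Z ψ` are exact and those of an `O(|t-s|^{1+α})` germ tend
to `0`, whence `∫ Z dY = ∫ Z ψ + ∫ Z dB`. For (i), `Z'_s Φ_{s,t} = O(|t-s|) = O(|t-s|^{2α})`.

The sewing lemma: Young's bound on `Σ Ξ - Ξ_{a,b}` for a single partition, applied blockwise,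
compares any partition of mesh `≤ h` with the uniform one of step `h` up to `O(h^{θ-1})`, so the
uniform sums are Cauchy and every fine partition is close to their limit. -/

open Filter Topology

section Sewing

variable {E : Type*} [NormedAddCommGroup E]

def riemannSum (Ξ : ℝ → ℝ → E) (π : ℕ → ℝ) (n : ℕ) : E :=
  ∑ k ∈ Finset.range n, Ξ (π k) (π (k + 1))

def DefectBound (a b C θ : ℝ) (Ξ : ℝ → ℝ → E) : Prop :=
  ∀ s u t, a ≤ s → s ≤ u → u ≤ t → t ≤ b → ‖Ξ s t - Ξ s u - Ξ u t‖ ≤ C * (t - s) ^ θ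

lemma riemannSum_add (Ξ : ℝ → ℝ → E) (π : ℕ → ℝ) (m n : ℕ) :
    riemannSum Ξ π (m + n) = riemannSum Ξ π m + riemannSum Ξ (fun j => π (m + j)) n := by
  simp only [riemannSum, Finset.sum_range_add, add_assoc]

lemma riemannSum_eq_sum_blocks (Ξ : ℝ → ℝ → E) (π : ℕ → ℝ) {κ : ℕ → ℕ} (hκ : Monotone κ)
    (hκ0 : κ 0 = 0) (m : ℕ) :
    riemannSum Ξ π (κ m) =
      ∑ j ∈ Finset.range m, riemannSum Ξ (fun i => π (κ j + i)) (κ (j + 1) - κ j) := by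
  induction m with
  | zero => simp [hκ0, riemannSum]
  | succ m ih =>
    rw [Finset.sum_range_succ, ← ih, ← riemannSum_add, Nat.add_sub_cancel' (hκ m.le_succ)]

lemma norm_sum_range_le_mul {f : ℕ → E} {m : ℕ} {c : ℝ} (hf : ∀ j < m, ‖f j‖ ≤ c) :
    ‖∑ j ∈ Finset.range m, f j‖ ≤ m * c := by
  refine (norm_sum_le _ _).trans ?_
  simpa using Finset.sum_le_card_nsmul _ _ c fun j hj => hf j (Finset.mem_range.1 hj)

lemma partition_le {π : ℕ → ℝ} {n : ℕ} (hπ : ∀ k < n, π k < π (k + 1)) {i j : ℕ}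
    (hij : i ≤ j) (hj : j ≤ n) : π i ≤ π j :=
  (strictMonoOn_Iic_of_lt_succ (by simpa [Order.succ_eq_add_one] using hπ)).monotoneOn
    (Set.mem_Iic.2 (hij.trans hj)) (Set.mem_Iic.2 hj) hij

lemma exists_le_lt_succ {π : ℕ → ℝ} {x : ℝ} : ∀ {n : ℕ}, π 0 ≤ x → x < π n →
    ∃ k < n, π k ≤ x ∧ x < π (k + 1)
  | 0, h0, hn => absurd h0 (not_le.2 hn)
  | n + 1, h0, hn => by
    by_cases hx : x < π n
    · obtain ⟨k, hk, hkx⟩ := exists_le_lt_succ h0 hx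
      exact ⟨k, hk.trans n.lt_succ_self, hkx⟩
    · exact ⟨n, n.lt_succ_self, not_lt.1 hx, hn⟩

lemma exists_pos_mul_rpow_lt (c : ℝ) {γ ε : ℝ} (hγ : 0 < γ) (hε : 0 < ε) :
    ∃ δ > 0, c * δ ^ γ < ε := by
  have h : Tendsto (fun δ : ℝ => c * δ ^ γ) (𝓝[>] 0) (𝓝 0) := by
    have := ((Real.continuousAt_rpow_const 0 γ (Or.inr hγ.le)).tendsto.const_mul c)
    simpa [Real.zero_rpow hγ.ne'] using this.mono_left nhdsWithin_le_nhds
  obtain ⟨δ, hδε, hδ⟩ := ((h.eventually (gt_mem_nhds hε)).and self_mem_nhdsWithin).exists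
  exact ⟨δ, hδ, hδε⟩

def sewingConst (θ : ℝ) : ℝ := 2 / (1 - 2 ^ (1 - θ))

lemma sewingConst_pos {θ : ℝ} (hθ : 1 < θ) : 0 < sewingConst θ :=
  div_pos two_pos (sub_pos.2 (Real.rpow_lt_one_of_one_lt_of_neg one_lt_two (by linarith)))

lemma sewingConst_recursion {θ : ℝ} (hθ : 1 < θ) (C : ℝ) {L : ℝ} (hL : 0 ≤ L) :
    2 * (sewingConst θ * C * (L / 2) ^ θ) + 2 * (C * L ^ θ) = sewingConst θ * C * L ^ θ := by
  have hq : (2 : ℝ) ^ (1 - θ) < 1 := Real.rpow_lt_one_of_one_lt_of_neg one_lt_two (by linarith)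
  have hK : sewingConst θ * 2 ^ (1 - θ) + 2 = sewingConst θ := by
    unfold sewingConst
    field_simp [(sub_pos.2 hq).ne']
    ring
  have hhalf : 2 * (L / 2) ^ θ = 2 ^ (1 - θ) * L ^ θ := by
    rw [Real.div_rpow hL zero_le_two, Real.rpow_sub two_pos, Real.rpow_one]
    field_simp
  linear_combination (sewingConst θ * C) * hhalf + (C * L ^ θ) * hK

lemma riemannSum_sub_split (Ξ : ℝ → ℝ → E) (π : ℕ → ℝ) (k n : ℕ) :
    riemannSum Ξ π (k + 1 + n) - Ξ (π 0) (π (k + 1 + n))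
      = (riemannSum Ξ π k - Ξ (π 0) (π k))
        + (riemannSum Ξ (fun j => π (k + 1 + j)) n - Ξ (π (k + 1)) (π (k + 1 + n)))
        - (Ξ (π 0) (π (k + 1 + n)) - Ξ (π 0) (π k) - Ξ (π k) (π (k + 1 + n)))
        - (Ξ (π k) (π (k + 1 + n)) - Ξ (π k) (π (k + 1)) - Ξ (π (k + 1)) (π (k + 1 + n))) := by
  rw [riemannSum_add, riemannSum, Finset.sum_range_succ, ← riemannSum]
  abel

namespace DefectBound

variable {a b C θ : ℝ} {Ξ : ℝ → ℝ → E}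

lemma apply_self (hΞ : DefectBound a b C θ Ξ) (hθ : 0 < θ) {x : ℝ} (hax : a ≤ x) (hxb : x ≤ b) :
    Ξ x x = 0 := by
  have h := hΞ x x x hax le_rfl le_rfl hxb
  rwa [sub_self, zero_sub, norm_neg, sub_self, Real.zero_rpow hθ.ne', mul_zero,
    norm_le_zero_iff] at h

/-- Young's estimate. Splitting at the midpoint of `[π 0, π n]` leaves two partitions of at most
half the length and two defect terms; `sewingConst θ` is the fixed point of the resulting
recursion. -/
theorem norm_riemannSum_sub_le (hΞ : DefectBound a b C θ Ξ) (hC : 0 ≤ C) (hθ : 1 < θ) :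
    ∀ (n : ℕ) (π : ℕ → ℝ), (∀ k < n, π k < π (k + 1)) → a ≤ π 0 → π n ≤ b →
      ‖riemannSum Ξ π n - Ξ (π 0) (π n)‖ ≤ sewingConst θ * C * (π n - π 0) ^ θ := by
  intro n
  induction n using Nat.strong_induction_on with
  | _ n IH =>
  intro π hπ ha hb
  rcases Nat.eq_zero_or_pos n with rfl | hn
  · simp [riemannSum, hΞ.apply_self (by linarith) ha hb, Real.zero_rpow (by linarith : θ ≠ 0)]
  set L := π n - π 0
  have hL0 : 0 < L := sub_pos.2 (hπ 0 hn |>.trans_le (partition_le hπ hn le_rfl))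
  obtain ⟨k, hk, hkmid, hmidk⟩ :=
    exists_le_lt_succ (π := π) (x := π 0 + L / 2) (n := n) (by linarith) (by linarith)
  obtain ⟨n', rfl⟩ : ∃ n', n = k + 1 + n' := ⟨n - (k + 1), by omega⟩
  set N := k + 1 + n'
  have h0k : π 0 ≤ π k := partition_le hπ (Nat.zero_le k) hk.le
  have hkN : π (k + 1) ≤ π N := partition_le hπ (by omega) le_rfl
  have hleft := IH k (by omega) π (fun i hi => hπ i (by omega)) ha (by linarith)
  have hright := IH n' (by omega) (fun j => π (k + 1 + j))
    (fun i hi => by simpa [add_assoc] using hπ (k + 1 + i) (by omega)) (by simpa using by linarith)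
    hb
  simp only [add_zero] at hright
  have hδ₁ := hΞ (π 0) (π k) (π N) ha h0k (by linarith) hb
  have hδ₂ := hΞ (π k) (π (k + 1)) (π N) (by linarith) (by linarith) hkN hb
  have hθ0 : 0 ≤ θ := by linarith
  have hK := sewingConst_pos hθ
  calc ‖riemannSum Ξ π N - Ξ (π 0) (π N)‖
      ≤ sewingConst θ * C * (π k - π 0) ^ θ + sewingConst θ * C * (π N - π (k + 1)) ^ θ
          + C * (π N - π 0) ^ θ + C * (π N - π k) ^ θ := by
        rw [riemannSum_sub_split]
        exact (norm_sub_le _ _).trans (add_le_add ((norm_sub_le _ _).trans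
          (add_le_add ((norm_add_le _ _).trans (add_le_add hleft hright)) hδ₁)) hδ₂)
    _ ≤ 2 * (sewingConst θ * C * (L / 2) ^ θ) + 2 * (C * L ^ θ) := by
        rw [two_mul, two_mul, ← add_assoc]
        gcongr <;> linarith
    _ = sewingConst θ * C * L ^ θ := sewingConst_recursion hθ C hL0.le

lemma norm_riemannSum_sub_coarsening_le (hΞ : DefectBound a b C θ Ξ) (hC : 0 ≤ C) (hθ : 1 < θ)
    {n m : ℕ} {π : ℕ → ℝ} (hπ : ∀ k < n, π k < π (k + 1)) (ha : a ≤ π 0) (hb : π n ≤ b)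
    {κ : ℕ → ℕ} (hκ : Monotone κ) (hκ0 : κ 0 = 0) (hκm : κ m = n) {ℓ : ℝ}
    (hℓ : ∀ j < m, π (κ (j + 1)) - π (κ j) ≤ ℓ) :
    ‖riemannSum Ξ π n - riemannSum Ξ (π ∘ κ) m‖ ≤ m * (sewingConst θ * C * ℓ ^ θ) := by
  rw [← hκm, riemannSum_eq_sum_blocks Ξ π hκ hκ0, riemannSum, ← Finset.sum_sub_distrib]
  refine norm_sum_range_le_mul fun j hj => ?_
  have hjκ : κ j + (κ (j + 1) - κ j) = κ (j + 1) := Nat.add_sub_cancel' (hκ j.le_succ)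
  have hκn : κ (j + 1) ≤ n := hκm ▸ hκ hj
  have hblock := norm_riemannSum_sub_le hΞ hC hθ (κ (j + 1) - κ j) (fun i => π (κ j + i))
    (fun i hi => by simpa [add_assoc] using hπ (κ j + i) (by omega))
    (by simpa using ha.trans (partition_le hπ (Nat.zero_le _) ((hκ j.le_succ).trans hκn)))
    (by simpa [hjκ] using (partition_le hπ hκn le_rfl).trans hb)
  simp only [add_zero, hjκ] at hblock
  refine hblock.trans (mul_le_mul_of_nonneg_left ?_ (mul_nonneg (sewingConst_pos hθ).le hC))
  exact Real.rpow_le_rpow (sub_nonneg.2 (partition_le hπ (hκ j.le_succ) hκn)) (hℓ j hj)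
    (by linarith)

lemma norm_riemannSum_sub_interlace_le (hΞ : DefectBound a b C θ Ξ) (hC : 0 ≤ C) (hθ : 0 < θ)
    {m : ℕ} {u v : ℕ → ℝ} (h0 : v 0 = u 0) (hm : v m = u m)
    (hva : ∀ j ≤ m, a ≤ v j) (hub : ∀ j ≤ m, u j ≤ b)
    (hvu : ∀ j ≤ m, v j ≤ u j) (huv : ∀ j < m, u j ≤ v (j + 1)) {ℓ : ℝ}
    (hv : ∀ j < m, v (j + 1) - v j ≤ ℓ) (hu : ∀ j < m, u (j + 1) - u j ≤ ℓ) :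
    ‖riemannSum Ξ v m - riemannSum Ξ u m‖ ≤ m * (2 * C * ℓ ^ θ) := by
  have htel : ∑ j ∈ Finset.range m, (Ξ (v j) (u j) - Ξ (v (j + 1)) (u (j + 1))) = 0 := by
    rw [Finset.sum_range_sub', ← h0, ← hm, hΞ.apply_self hθ (hva 0 (Nat.zero_le m))
      (h0 ▸ hub 0 (Nat.zero_le m)), hΞ.apply_self hθ (hva m le_rfl) (hm ▸ hub m le_rfl), sub_zero]
  have hsplit : riemannSum Ξ v m - riemannSum Ξ u m = ∑ j ∈ Finset.range m,
      ((Ξ (v j) (v (j + 1)) - Ξ (v j) (u j) - Ξ (u j) (v (j + 1)))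
        - (Ξ (u j) (u (j + 1)) - Ξ (u j) (v (j + 1)) - Ξ (v (j + 1)) (u (j + 1)))) := by
    rw [riemannSum, riemannSum, ← Finset.sum_sub_distrib, ← sub_zero (∑ j ∈ _, _), ← htel,
      ← Finset.sum_sub_distrib]
    exact Finset.sum_congr rfl fun j _ => by abel
  rw [hsplit]
  refine norm_sum_range_le_mul fun j hj => (norm_sub_le _ _).trans ?_
  have hvj := hvu j hj.le
  have hvj' := hvu (j + 1) hj
  have huj := huv j hj
  rw [two_mul, add_mul]
  gcongr
  · refine (hΞ _ _ _ (hva j hj.le) hvj huj ((hvj').trans (hub _ hj))).trans ?_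
    gcongr
    · linarith
    · exact hv j hj
  · refine (hΞ _ _ _ ((hva j hj.le).trans hvj) huj hvj' (hub _ hj)).trans ?_
    gcongr
    · linarith
    · exact hu j hj

/-- `κ j` is the index of the last point of `π` at or before the grid point `u j`. -/
lemma exists_coarsening {π u : ℕ → ℝ} {n m : ℕ} {h : ℝ} (hh : 0 < h)
    (hπ : ∀ k < n, π k < π (k + 1)) (hmesh : ∀ k < n, π (k + 1) - π k ≤ h)
    (hu : ∀ j, u (j + 1) = u j + h) (h0 : π 0 = u 0) (hn : π n = u m) :
    ∃ κ : ℕ → ℕ, Monotone κ ∧ κ 0 = 0 ∧ κ m = n ∧ (∀ j, κ j ≤ n ∧ π (κ j) ≤ u j) ∧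
      ∀ j < m, u j - h < π (κ j) ∧ u j < π (κ (j + 1)) := by
  have hustrict : StrictMono u := strictMono_nat_of_lt_succ fun j => by linarith [hu j]
  set κ : ℕ → ℕ := fun j => Nat.findGreatest (fun k => π k ≤ u j) n
  have hκu : ∀ j, π (κ j) ≤ u j := fun j =>
    Nat.findGreatest_spec (P := fun k => π k ≤ u j) (Nat.zero_le n)
      (h0 ▸ hustrict.monotone (Nat.zero_le j))
  have hκn : ∀ j, κ j ≤ n := fun j => Nat.findGreatest_le n
  have hκstep : ∀ j < m, κ j < n ∧ u j < π (κ j + 1) := fun j hj => by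
    have hlt : κ j < n := (hκn j).lt_of_ne fun heq => by
      have := hκu j
      rw [heq, hn] at this
      exact this.not_gt (hustrict hj)
    exact ⟨hlt, not_le.1 (Nat.findGreatest_is_greatest (Nat.lt_succ_self _) hlt)⟩
  refine ⟨κ, fun i j hij => Nat.findGreatest_mono_left (fun k hk => hk.trans
    (hustrict.monotone hij)) n, Nat.findGreatest_eq_zero_iff.2 fun k hk hkn => ?_,
    Nat.findGreatest_eq hn.le, fun j => ⟨hκn j, hκu j⟩, fun j hj => ⟨?_, ?_⟩⟩
  · exact not_le.2 (h0 ▸ (hπ 0 (by omega)).trans_le (partition_le hπ hk hkn))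
  · linarith [(hκstep j hj).2, hmesh (κ j) (hκstep j hj).1]
  · refine (hκstep j hj).2.trans_le (partition_le hπ ?_ (hκn _))
    refine Nat.le_findGreatest (hκstep j hj).1 ?_
    linarith [hmesh (κ j) (hκstep j hj).1, hκu j, hu j]

/-- `π ∘ κ` coarsens `π` and interlaces with the grid, so both comparisons above apply. -/
lemma norm_riemannSum_sub_uniform_le (hΞ : DefectBound a b C θ Ξ) (hC : 0 ≤ C) (hθ : 1 < θ)
    {h : ℝ} (hh : 0 < h) {m n : ℕ} (hmh : a + m * h = b) {π : ℕ → ℝ}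
    (hπ : ∀ k < n, π k < π (k + 1)) (h0 : π 0 = a) (hn : π n = b)
    (hmesh : ∀ k < n, π (k + 1) - π k ≤ h) :
    ‖riemannSum Ξ π n - riemannSum Ξ (fun j : ℕ => a + j * h) m‖
      ≤ (sewingConst θ + 2) * C * 2 ^ θ * (b - a) * h ^ (θ - 1) := by
  set u : ℕ → ℝ := fun j => a + j * h with hu
  have hstep : ∀ j, u (j + 1) = u j + h := fun j => by simp only [hu]; push_cast; ring
  obtain ⟨κ, hκ, hκ0, hκm, hκu, hκgap⟩ := exists_coarsening (m := m) hh hπ hmesh hstep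
    (by simp [hu, h0]) (by simp [hu, hn, hmh])
  have hcoarse := norm_riemannSum_sub_coarsening_le hΞ hC hθ hπ h0.ge hn.le hκ hκ0 hκm
    (ℓ := 2 * h) fun j hj => by linarith [(hκu (j + 1)).2, (hκgap j hj).1, hstep j]
  have hinter := norm_riemannSum_sub_interlace_le hΞ hC (by linarith : (0 : ℝ) < θ)
    (u := u) (v := π ∘ κ) (ℓ := 2 * h) (by simp [hκ0, h0, hu]) (by simp [hκm, hn, hu, hmh])
    (fun j _ => h0 ▸ partition_le hπ (Nat.zero_le _) (hκu j).1)
    (fun j hj => hmh ▸ (by simp only [hu]; gcongr)) (fun j _ => (hκu j).2)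
    (fun j hj => (hκgap j hj).2.le)
    (fun j hj => by simp only [Function.comp]; linarith [(hκu (j + 1)).2, (hκgap j hj).1, hstep j])
    (fun j _ => by linarith [hstep j])
  have hpow : (m : ℝ) * (2 * h) ^ θ = 2 ^ θ * (b - a) * h ^ (θ - 1) := by
    rw [Real.mul_rpow zero_le_two hh.le, ← hmh, Real.rpow_sub_one hh.ne']
    field_simp
    ring
  calc ‖riemannSum Ξ π n - riemannSum Ξ u m‖
      ≤ ‖riemannSum Ξ π n - riemannSum Ξ (π ∘ κ) m‖
          + ‖riemannSum Ξ (π ∘ κ) m - riemannSum Ξ u m‖ :=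
        norm_sub_le_norm_sub_add_norm_sub _ _ _
    _ ≤ m * (sewingConst θ * C * (2 * h) ^ θ) + m * (2 * C * (2 * h) ^ θ) :=
        add_le_add hcoarse hinter
    _ = (sewingConst θ + 2) * C * 2 ^ θ * (b - a) * h ^ (θ - 1) := by
        linear_combination ((sewingConst θ + 2) * C) * hpow

end DefectBound

theorem exists_rsConv_of_defectBound [CompleteSpace E] {a b C θ : ℝ} {Ξ : ℝ → ℝ → E}
    (hab : a < b) (hC : 0 ≤ C) (hθ : 1 < θ) (hΞ : DefectBound a b C θ Ξ) :
    ∃ I, RSConv a b Ξ I := by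
  set c := (sewingConst θ + 2) * C * 2 ^ θ * (b - a)
  set h : ℕ → ℝ := fun N => (b - a) / (N + 1) with hh_def
  set S : ℕ → E := fun N => riemannSum Ξ (fun j : ℕ => a + j * h N) (N + 1)
  have hh : ∀ N, 0 < h N := fun N => div_pos (sub_pos.2 hab) N.cast_add_one_pos
  have hcomp : ∀ N n (π : ℕ → ℝ), (∀ k < n, π k < π (k + 1)) → π 0 = a → π n = b →
      (∀ k < n, π (k + 1) - π k ≤ h N) → ‖riemannSum Ξ π n - S N‖ ≤ c * h N ^ (θ - 1) :=
    fun N n π hπ h0 hn hmesh => hΞ.norm_riemannSum_sub_uniform_le hC hθ (hh N)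
      (by simp only [hh_def]; push_cast; field_simp; ring) hπ h0 hn hmesh
  have hlim : Tendsto (fun N => c * h N ^ (θ - 1)) atTop (𝓝 0) := by
    have hh0 : Tendsto h atTop (𝓝 0) := by
      have := tendsto_one_div_add_atTop_nhds_zero_nat.const_mul (b - a)
      rw [mul_zero] at this
      exact this.congr fun N => by simp only [hh_def]; ring
    have := (hh0.rpow_const (p := θ - 1) (Or.inr (by linarith))).const_mul c
    rwa [Real.zero_rpow (by linarith), mul_zero] at this
  have hS : ∀ N N', N ≤ N' → dist (S N) (S N') ≤ c * h N ^ (θ - 1) := by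
    intro N N' hNN'
    rw [dist_comm, dist_eq_norm]
    refine hcomp N (N' + 1) _ (fun k _ => by push_cast; nlinarith [hh N']) (by simp)
      (by simp only [hh_def]; push_cast; field_simp; ring) fun k _ => ?_
    have : h N' ≤ h N := div_le_div_of_nonneg_left (sub_pos.2 hab).le N.cast_add_one_pos
      (by exact_mod_cast Nat.succ_le_succ hNN')
    push_cast
    linarith
  obtain ⟨I, hI⟩ := cauchySeq_tendsto_of_complete (cauchySeq_of_le_tendsto_0' _ hS hlim)
  refine ⟨I, fun η hη => ?_⟩
  obtain ⟨N, hNI, hNc⟩ := ((hI.eventually (Metric.ball_mem_nhds I (half_pos hη))).and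
    (hlim.eventually (gt_mem_nhds (half_pos hη)))).exists
  refine ⟨h N, hh N, fun n π h0 hn hπ hmesh => ?_⟩
  calc ‖riemannSum Ξ π n - I‖ ≤ ‖riemannSum Ξ π n - S N‖ + ‖S N - I‖ :=
        norm_sub_le_norm_sub_add_norm_sub _ _ _
    _ < η / 2 + η / 2 :=
        add_lt_add_of_le_of_lt ((hcomp N n π hπ h0 hn fun k hk => (hmesh k hk).le).trans hNc.le)
          (by rwa [← dist_eq_norm])
    _ = η := add_halves η

lemma RSConv.add {a b : ℝ} {F G : ℝ → ℝ → E} {I J : E} (hF : RSConv a b F I)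
    (hG : RSConv a b G J) : RSConv a b (fun u v => F u v + G u v) (I + J) := by
  intro η hη
  obtain ⟨δF, hδF, hF⟩ := hF (η / 2) (half_pos hη)
  obtain ⟨δG, hδG, hG⟩ := hG (η / 2) (half_pos hη)
  refine ⟨min δF δG, lt_min hδF hδG, fun n π h0 hn hπ hmesh => ?_⟩
  have hF' := hF n π h0 hn hπ fun k hk => (hmesh k hk).trans_le (min_le_left _ _)
  have hG' := hG n π h0 hn hπ fun k hk => (hmesh k hk).trans_le (min_le_right _ _)
  rw [Finset.sum_add_distrib, add_sub_add_comm]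
  linarith [norm_add_le (∑ k ∈ Finset.range n, F (π k) (π (k + 1)) - I)
    (∑ k ∈ Finset.range n, G (π k) (π (k + 1)) - J)]

/-- An additive germ has no defect, so Young's estimate makes all its Riemann sums exact. -/
lemma rsConv_of_additive {a b : ℝ} {A : ℝ → ℝ → E}
    (hA : ∀ s u t, a ≤ s → s ≤ u → u ≤ t → t ≤ b → A s t = A s u + A u t) :
    RSConv a b A (A a b) := by
  have hA0 : DefectBound a b 0 2 A := fun s u t hs hsu hut ht => by
    simp [hA s u t hs hsu hut ht]
  refine fun η hη => ⟨1, one_pos, fun n π h0 hn hπ _ => ?_⟩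
  have := hA0.norm_riemannSum_sub_le le_rfl one_lt_two n π hπ h0.ge hn.le
  rw [h0, hn, mul_zero, zero_mul] at this
  exact this.trans_lt hη

lemma rsConv_intervalIntegral [NormedSpace ℝ E] {a b : ℝ} {f : ℝ → E}
    (hf : ContinuousOn f (Set.Icc a b)) :
    RSConv a b (fun s t => ∫ w in s..t, f w) (∫ w in a..b, f w) := by
  have hint : ∀ x y, a ≤ x → x ≤ y → y ≤ b → IntervalIntegrable f MeasureTheory.volume x y :=
    fun x y hx hxy hy => (hf.mono (Set.uIcc_subset_Icc ⟨hx, by linarith⟩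
      ⟨by linarith, hy⟩)).intervalIntegrable
  exact rsConv_of_additive fun s u t hs hsu hut ht =>
    (intervalIntegral.integral_add_adjacent_intervals (hint s u hs hsu (by linarith))
      (hint u t (by linarith) hut ht)).symm

lemma rsConv_zero_of_norm_le {a b C θ : ℝ} {R : ℝ → ℝ → E} (hC : 0 ≤ C) (hθ : 1 < θ)
    (hR : ∀ s t, a ≤ s → s ≤ t → t ≤ b → ‖R s t‖ ≤ C * (t - s) ^ θ) : RSConv a b R 0 := by
  intro η hη
  obtain ⟨δ, hδ, hδη⟩ := exists_pos_mul_rpow_lt (C * (b - a)) (sub_pos.2 hθ) hη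
  refine ⟨δ, hδ, fun n π h0 hn hπ hmesh => ?_⟩
  rw [sub_zero]
  calc ‖∑ k ∈ Finset.range n, R (π k) (π (k + 1))‖
      ≤ ∑ k ∈ Finset.range n, C * δ ^ (θ - 1) * (π (k + 1) - π k) := by
        refine norm_sum_le_of_le _ fun k hk => ?_
        have hk := Finset.mem_range.1 hk
        have hΔ := sub_pos.2 (hπ k hk)
        refine (hR _ _ (h0 ▸ partition_le hπ (Nat.zero_le k) hk.le) (hπ k hk).le
          (hn ▸ partition_le hπ hk le_rfl)).trans ?_
        rw [← sub_add_cancel θ 1, Real.rpow_add_one hΔ.ne', sub_add_cancel, ← mul_assoc]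
        gcongr
        exact (hmesh k hk).le
    _ = C * (b - a) * δ ^ (θ - 1) := by
        rw [← Finset.mul_sum, Finset.sum_range_sub, h0, hn]; ring
    _ < η := hδη

end Sewing

section Holder

variable {E : Type*} [NormedAddCommGroup E] {β a b : ℝ}

lemma exists_holder_bound {F : ℝ → ℝ → E} (h : BddAbove (pairSet β a b F)) (hβ : 0 < β)
    (hF : ∀ s ∈ Set.Icc a b, F s s = 0) :
    ∃ M, 0 ≤ M ∧ ∀ s ∈ Set.Icc a b, ∀ t ∈ Set.Icc a b, ‖F s t‖ ≤ M * |t - s| ^ β := by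
  obtain ⟨M, hM⟩ := h
  refine ⟨max M 0, le_max_right _ _, fun s hs t ht => ?_⟩
  rcases eq_or_ne s t with rfl | hst
  · simp [hF s hs, Real.zero_rpow hβ.ne']
  have hpos : 0 < |t - s| ^ β := Real.rpow_pos_of_pos (abs_pos.2 (sub_ne_zero.2 hst.symm)) β
  have := hM ⟨s, t, hs, ht, rfl⟩
  rw [div_le_iff₀ hpos] at this
  exact this.trans (mul_le_mul_of_nonneg_right (le_max_left _ _) hpos.le)

lemma bddAbove_pairSet_of_le {F : ℝ → ℝ → E} {M : ℝ}
    (h : ∀ s ∈ Set.Icc a b, ∀ t ∈ Set.Icc a b, ‖F s t‖ ≤ M * |t - s| ^ β) :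
    BddAbove (pairSet β a b F) := by
  refine ⟨max M 0, ?_⟩
  rintro x ⟨s, t, hs, ht, rfl⟩
  exact div_le_of_le_mul₀ (by positivity) (le_max_right _ _)
    ((h s hs t ht).trans (by gcongr; exact le_max_left _ _))

lemma continuousOn_of_holder {f : ℝ → E} {M : ℝ} (hβ : 0 < β)
    (h : ∀ s ∈ Set.Icc a b, ∀ t ∈ Set.Icc a b, ‖f t - f s‖ ≤ M * |t - s| ^ β) :
    ContinuousOn f (Set.Icc a b) := by
  intro x hx
  have hlim : Tendsto (fun y => M * |y - x| ^ β) (𝓝[Set.Icc a b] x) (𝓝 0) := by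
    have : Continuous fun y : ℝ => M * |y - x| ^ β :=
      continuous_const.mul ((continuous_id.sub continuous_const).abs.rpow_const
        fun _ => Or.inr hβ.le)
    simpa [Real.zero_rpow hβ.ne'] using (this.tendsto x).mono_left nhdsWithin_le_nhds
  exact tendsto_iff_norm_sub_tendsto_zero.2 <| squeeze_zero' (Eventually.of_forall fun _ =>
    norm_nonneg _) (eventually_nhdsWithin_of_forall fun y hy => h x hx y hy) hlim

end Holder

lemma le_rpow_one_sub_mul_rpow {x T β : ℝ} (hx : 0 ≤ x) (hxT : x ≤ T) (hβ : β ≤ 1) :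
    x ≤ T ^ (1 - β) * x ^ β := by
  calc x = x ^ (1 - β) * x ^ β := by
        rw [← Real.rpow_add' hx (by norm_num), sub_add_cancel, Real.rpow_one]
    _ ≤ T ^ (1 - β) * x ^ β := by gcongr

lemma mul_le_mul_mul_rpow_add {x y M₁ M₂ s u t β γ : ℝ} (hM₁ : 0 ≤ M₁) (hM₂ : 0 ≤ M₂)
    (hsu : s ≤ u) (hut : u ≤ t) (hβ : 0 < β) (hγ : 0 < γ) (hx0 : 0 ≤ x)
    (hx : x ≤ M₁ * |u - s| ^ β) (hy0 : 0 ≤ y) (hy : y ≤ M₂ * |t - u| ^ γ) :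
    x * y ≤ M₁ * M₂ * (t - s) ^ (β + γ) := by
  rw [abs_of_nonneg (sub_nonneg.2 hsu)] at hx
  rw [abs_of_nonneg (sub_nonneg.2 hut)] at hy
  calc x * y ≤ (M₁ * (u - s) ^ β) * (M₂ * (t - u) ^ γ) := mul_le_mul hx hy hy0 (hx0.trans hx)
    _ = M₁ * M₂ * ((u - s) ^ β * (t - u) ^ γ) := by ring
    _ ≤ M₁ * M₂ * (t - s) ^ (β + γ) := by
        rw [Real.rpow_add' (sub_nonneg.2 (hsu.trans hut)) (add_pos hβ hγ).ne']
        have hts : 0 ≤ t - s := by linarith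
        gcongr

section RoughPaths

variable {r d : ℕ}

lemma tens_zero_left (y : EuclideanSpace ℝ (Fin r)) : tens 0 y = 0 := by
  ext p
  simp [tens]

lemma norm_tens (x y : EuclideanSpace ℝ (Fin r)) : ‖tens x y‖ = ‖x‖ * ‖y‖ := by
  rw [EuclideanSpace.norm_eq, EuclideanSpace.norm_eq, EuclideanSpace.norm_eq,
    ← Real.sqrt_mul (by positivity), Finset.sum_mul_sum, Fintype.sum_prod_type]
  simp [tens, mul_pow]

lemma Chen.apply_self {T : ℝ} {B : ℝ → EuclideanSpace ℝ (Fin r)}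
    {𝔹 : ℝ → ℝ → EuclideanSpace ℝ (Fin r × Fin r)} (hChen : Chen T B 𝔹) :
    ∀ s ∈ Set.Icc 0 T, 𝔹 s s = 0 := fun s hs => by
  simpa [tens_zero_left] using hChen s hs s hs s hs

variable (L L' : EuclideanSpace ℝ (Fin r) →L[ℝ] EuclideanSpace ℝ (Fin r) →L[ℝ]
  EuclideanSpace ℝ (Fin d)) (M N : EuclideanSpace ℝ (Fin r × Fin r))

lemma bapp_add : bapp L (M + N) = bapp L M + bapp L N := by
  simp [bapp, add_smul, Finset.sum_add_distrib]

lemma bapp_sub : bapp L (M - N) = bapp L M - bapp L N := by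
  simp [bapp, sub_smul, Finset.sum_sub_distrib]

lemma bapp_sub_left : bapp (L - L') M = bapp L M - bapp L' M := by
  simp [bapp, smul_sub, Finset.sum_sub_distrib]

lemma bapp_tens (x y : EuclideanSpace ℝ (Fin r)) : bapp L (tens x y) = L x y := by
  conv_rhs => rw [← (EuclideanSpace.basisFun (Fin r) ℝ).sum_repr x,
    ← (EuclideanSpace.basisFun (Fin r) ℝ).sum_repr y]
  simp [bapp, tens, Fintype.sum_prod_type, Finset.smul_sum, smul_smul]
  rw [Finset.sum_comm]
  simp only [mul_comm]

lemma norm_bapp_le : ‖bapp L M‖ ≤ (r * r) * ‖L‖ * ‖M‖ := by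
  have hterm : ∀ p : Fin r × Fin r,
      ‖M p • L (EuclideanSpace.single p.1 1) (EuclideanSpace.single p.2 1)‖ ≤ ‖L‖ * ‖M‖ := by
    intro p
    rw [norm_smul, mul_comm]
    gcongr
    · simpa using L.le_opNorm₂ (EuclideanSpace.single p.1 (1 : ℝ)) (EuclideanSpace.single p.2 1)
    · simpa using PiLp.norm_apply_le M p
  calc ‖bapp L M‖ ≤ ∑ p : Fin r × Fin r, ‖L‖ * ‖M‖ :=
        (norm_sum_le _ _).trans (Finset.sum_le_sum fun p _ => hterm p)
    _ = (r * r) * ‖L‖ * ‖M‖ := by simp [mul_assoc]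

end RoughPaths

def compensatedGerm {r d : ℕ}
    (Z : ℝ → EuclideanSpace ℝ (Fin r) →L[ℝ] EuclideanSpace ℝ (Fin d))
    (Z' : ℝ → EuclideanSpace ℝ (Fin r) →L[ℝ] EuclideanSpace ℝ (Fin r) →L[ℝ]
      EuclideanSpace ℝ (Fin d))
    (X : ℝ → EuclideanSpace ℝ (Fin r)) (𝕏 : ℝ → ℝ → EuclideanSpace ℝ (Fin r × Fin r)) :
    ℝ → ℝ → EuclideanSpace ℝ (Fin d) :=
  fun u v => Z u (X v - X u) + bapp (Z' u) (𝕏 u v)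

section Translation

open Set
open scoped Interval

variable {r d : ℕ} {T α : ℝ} {B ψ : ℝ → EuclideanSpace ℝ (Fin r)}
  {𝔹 : ℝ → ℝ → EuclideanSpace ℝ (Fin r × Fin r)}
  {Z : ℝ → EuclideanSpace ℝ (Fin r) →L[ℝ] EuclideanSpace ℝ (Fin d)}
  {Z' : ℝ → EuclideanSpace ℝ (Fin r) →L[ℝ] EuclideanSpace ℝ (Fin r) →L[ℝ]
    EuclideanSpace ℝ (Fin d)}

lemma compensatedGerm_defect {X : ℝ → EuclideanSpace ℝ (Fin r)}
    {𝕏 : ℝ → ℝ → EuclideanSpace ℝ (Fin r × Fin r)} {s u t : ℝ}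
    (hChen : 𝕏 s t - 𝕏 s u - 𝕏 u t = tens (X u - X s) (X t - X u)) :
    compensatedGerm Z Z' X 𝕏 s t - compensatedGerm Z Z' X 𝕏 s u - compensatedGerm Z Z' X 𝕏 u t
      = -(Z u - Z s - Z' s (X u - X s)) (X t - X u) - bapp (Z' u - Z' s) (𝕏 u t) := by
  have h𝕏 : 𝕏 s t = 𝕏 s u + 𝕏 u t + tens (X u - X s) (X t - X u) := by rw [← hChen]; abel
  have hX : X t - X s = (X u - X s) + (X t - X u) := by abel
  simp only [compensatedGerm, h𝕏, hX, bapp_add, bapp_tens, bapp_sub_left, map_add,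
    sub_apply]
  abel

lemma defectBound_compensatedGerm (hChen : Chen T B 𝔹) (hα : 0 < α) {MB M𝔹 MZ' MR : ℝ}
    (hMB0 : 0 ≤ MB) (hM𝔹0 : 0 ≤ M𝔹) (hMZ'0 : 0 ≤ MZ') (hMR0 : 0 ≤ MR)
    (hB : ∀ s ∈ Icc 0 T, ∀ t ∈ Icc 0 T, ‖B t - B s‖ ≤ MB * |t - s| ^ α)
    (h𝔹 : ∀ s ∈ Icc 0 T, ∀ t ∈ Icc 0 T, ‖𝔹 s t‖ ≤ M𝔹 * |t - s| ^ (2 * α))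
    (hZ' : ∀ s ∈ Icc 0 T, ∀ t ∈ Icc 0 T, ‖Z' t - Z' s‖ ≤ MZ' * |t - s| ^ α)
    (hR : ∀ s ∈ Icc 0 T, ∀ t ∈ Icc 0 T, ‖Z t - Z s - Z' s (B t - B s)‖ ≤ MR * |t - s| ^ (2 * α)) :
    DefectBound 0 T (MR * MB + r * r * MZ' * M𝔹) (3 * α) (compensatedGerm Z Z' B 𝔹) := by
  intro s u t hs hsu hut ht
  have hs' : s ∈ Icc 0 T := ⟨hs, by linarith⟩
  have hu' : u ∈ Icc 0 T := ⟨by linarith, by linarith⟩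
  have ht' : t ∈ Icc 0 T := ⟨by linarith, ht⟩
  rw [compensatedGerm_defect (hChen s hs' u hu' t ht')]
  have h₁ : ‖(Z u - Z s - Z' s (B u - B s)) (B t - B u)‖ ≤ MR * MB * (t - s) ^ (2 * α + α) :=
    (ContinuousLinearMap.le_opNorm _ _).trans (mul_le_mul_mul_rpow_add hMR0 hMB0 hsu hut
      (by linarith) hα (norm_nonneg _) (hR s hs' u hu') (norm_nonneg _) (hB u hu' t ht'))
  have h₂ : ‖bapp (Z' u - Z' s) (𝔹 u t)‖ ≤ r * r * (MZ' * M𝔹 * (t - s) ^ (α + 2 * α)) := by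
    refine (norm_bapp_le _ _).trans ?_
    rw [mul_assoc (r * r : ℝ)]
    exact mul_le_mul_of_nonneg_left (mul_le_mul_mul_rpow_add hMZ'0 hM𝔹0 hsu hut hα
      (by linarith) (norm_nonneg (Z' u - Z' s)) (hZ' s hs' u hu') (norm_nonneg _) (h𝔹 u hu' t ht'))
      (by positivity)
  rw [show 2 * α + α = 3 * α by ring] at h₁
  rw [show α + 2 * α = 3 * α by ring] at h₂
  calc _ ≤ ‖(Z u - Z s - Z' s (B u - B s)) (B t - B u)‖ + ‖bapp (Z' u - Z' s) (𝔹 u t)‖ := by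
        rw [← norm_neg ((Z u - Z s - Z' s (B u - B s)) (B t - B u))]
        exact norm_sub_le _ _
    _ ≤ (MR * MB + r * r * MZ' * M𝔹) * (t - s) ^ (3 * α) := by linarith

lemma Phi_sub (hψc : Continuous ψ) (s t : ℝ) : Phi ψ t - Phi ψ s = ∫ u in s..t, ψ u :=
  intervalIntegral.integral_interval_sub_left (hψc.intervalIntegrable _ _)
    (hψc.intervalIntegrable _ _)

lemma norm_Phi_sub_le (hψc : Continuous ψ) {Mψ : ℝ} (hψ : ∀ w ∈ Icc 0 T, ‖ψ w‖ ≤ Mψ) {s t : ℝ}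
    (hs : s ∈ Icc 0 T) (ht : t ∈ Icc 0 T) : ‖Phi ψ t - Phi ψ s‖ ≤ Mψ * |t - s| := by
  rw [Phi_sub hψc]
  exact intervalIntegral.norm_integral_le_of_norm_le_const fun w hw =>
    hψ w (uIcc_subset_Icc hs ht (uIoc_subset_uIcc hw))

lemma norm_controlled_translate_le (hψc : Continuous ψ) (hα : 2 * α ≤ 1) {Mψ NZ' MR : ℝ}
    (hψ : ∀ w ∈ Icc 0 T, ‖ψ w‖ ≤ Mψ) (hZ' : ∀ s ∈ Icc 0 T, ‖Z' s‖ ≤ NZ')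
    (hR : ∀ s ∈ Icc 0 T, ∀ t ∈ Icc 0 T, ‖Z t - Z s - Z' s (B t - B s)‖ ≤ MR * |t - s| ^ (2 * α))
    (s : ℝ) (hs : s ∈ Icc 0 T) (t : ℝ) (ht : t ∈ Icc 0 T) :
    ‖Z t - Z s - Z' s ((Phi ψ t + B t) - (Phi ψ s + B s))‖
      ≤ (MR + NZ' * Mψ * T ^ (1 - 2 * α)) * |t - s| ^ (2 * α) := by
  have hNZ' : 0 ≤ NZ' := (norm_nonneg (Z' s)).trans (hZ' s hs)
  have hMψ : 0 ≤ Mψ := (norm_nonneg (ψ s)).trans (hψ s hs)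
  have htsT : |t - s| ≤ T := abs_sub_le_iff.2 ⟨by linarith [ht.2, hs.1], by linarith [hs.2, ht.1]⟩
  have hsplit : Z t - Z s - Z' s ((Phi ψ t + B t) - (Phi ψ s + B s))
      = (Z t - Z s - Z' s (B t - B s)) - Z' s (Phi ψ t - Phi ψ s) := by
    rw [show (Phi ψ t + B t) - (Phi ψ s + B s) = (B t - B s) + (Phi ψ t - Phi ψ s) by abel,
      map_add]
    abel
  calc _ ≤ MR * |t - s| ^ (2 * α) + NZ' * (Mψ * |t - s|) := by
        rw [hsplit]
        exact (norm_sub_le _ _).trans (add_le_add (hR s hs t ht) ((ContinuousLinearMap.le_opNorm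
          _ _).trans (mul_le_mul (hZ' s hs) (norm_Phi_sub_le hψc hψ hs ht) (norm_nonneg _) hNZ')))
    _ ≤ MR * |t - s| ^ (2 * α) + NZ' * (Mψ * (T ^ (1 - 2 * α) * |t - s| ^ (2 * α))) := by
        gcongr
        exact le_rpow_one_sub_mul_rpow (abs_nonneg _) htsT hα
    _ = (MR + NZ' * Mψ * T ^ (1 - 2 * α)) * |t - s| ^ (2 * α) := by ring

lemma norm_Phi_sub_add_sub_le (hψc : Continuous ψ) (hα1 : α ≤ 1) {Mψ MB : ℝ}
    (hψ : ∀ w ∈ Icc 0 T, ‖ψ w‖ ≤ Mψ)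
    (hB : ∀ s ∈ Icc 0 T, ∀ t ∈ Icc 0 T, ‖B t - B s‖ ≤ MB * |t - s| ^ α)
    {s t : ℝ} (hs : s ∈ Icc 0 T) (ht : t ∈ Icc 0 T) :
    ‖(Phi ψ t - Phi ψ s) + (B t - B s)‖ ≤ (Mψ * T ^ (1 - α) + MB) * |t - s| ^ α := by
  have hMψ : 0 ≤ Mψ := (norm_nonneg (ψ s)).trans (hψ s hs)
  have htsT : |t - s| ≤ T := abs_sub_le_iff.2 ⟨by linarith [ht.2, hs.1], by linarith [hs.2, ht.1]⟩
  calc _ ≤ Mψ * |t - s| + MB * |t - s| ^ α :=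
        (norm_add_le _ _).trans (add_le_add (norm_Phi_sub_le hψc hψ hs ht) (hB s hs t ht))
    _ ≤ Mψ * (T ^ (1 - α) * |t - s| ^ α) + MB * |t - s| ^ α := by
        gcongr
        exact le_rpow_one_sub_mul_rpow (abs_nonneg _) htsT hα1
    _ = (Mψ * T ^ (1 - α) + MB) * |t - s| ^ α := by ring

lemma norm_YY_sub_le (hψc : Continuous ψ) (hα : 0 < α) (hα1 : α ≤ 1) {Mψ MB : ℝ} (hMB0 : 0 ≤ MB)
    (hψ : ∀ w ∈ Icc 0 T, ‖ψ w‖ ≤ Mψ)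
    (hB : ∀ s ∈ Icc 0 T, ∀ t ∈ Icc 0 T, ‖B t - B s‖ ≤ MB * |t - s| ^ α)
    {u v : ℝ} (hu : 0 ≤ u) (huv : u ≤ v) (hv : v ≤ T) :
    ‖YY 𝔹 ψ B u v - 𝔹 u v‖ ≤ Mψ * (Mψ * T ^ (1 - α) + 3 * MB) * (v - u) ^ (1 + α) := by
  have hu' : u ∈ Icc 0 T := ⟨hu, by linarith⟩
  have hv' : v ∈ Icc 0 T := ⟨by linarith, hv⟩
  have hMψ : 0 ≤ Mψ := (norm_nonneg (ψ u)).trans (hψ u hu')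
  have hT : 0 ≤ T := by linarith
  have hmem : ∀ w ∈ Ι u v, w ∈ Icc 0 T ∧ |w - u| ^ α ≤ |v - u| ^ α := fun w hw => by
    refine ⟨uIcc_subset_Icc hu' hv' (uIoc_subset_uIcc hw), ?_⟩
    rw [uIoc_of_le huv] at hw
    rw [abs_of_pos (sub_pos.2 hw.1), abs_of_nonneg (sub_nonneg.2 huv)]
    exact Real.rpow_le_rpow (by linarith [hw.1]) (by linarith [hw.2]) hα.le
  have hI₁ : ‖∫ w in u..v, tens ((Phi ψ w - Phi ψ u) + (B w - B u)) (ψ w)‖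
      ≤ (Mψ * T ^ (1 - α) + MB) * |v - u| ^ α * Mψ * |v - u| :=
    intervalIntegral.norm_integral_le_of_norm_le_const fun w hw => by
      obtain ⟨hw, hwu⟩ := hmem w hw
      rw [norm_tens]
      exact mul_le_mul ((norm_Phi_sub_add_sub_le hψc hα1 hψ hB hu' hw).trans
        (mul_le_mul_of_nonneg_left hwu (by positivity))) (hψ w hw) (norm_nonneg _) (by positivity)
  have hI₂ : ‖tens (Phi ψ v - Phi ψ u) (B v - B u)‖ ≤ Mψ * |v - u| * (MB * |v - u| ^ α) := by
    rw [norm_tens]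
    exact mul_le_mul (norm_Phi_sub_le hψc hψ hu' hv') (hB u hu' v hv') (norm_nonneg _)
      (by positivity)
  have hI₃ : ‖∫ w in u..v, tens (ψ w) (B w - B u)‖ ≤ Mψ * (MB * |v - u| ^ α) * |v - u| :=
    intervalIntegral.norm_integral_le_of_norm_le_const fun w hw => by
      obtain ⟨hw, hwu⟩ := hmem w hw
      rw [norm_tens]
      exact mul_le_mul (hψ w hw) ((hB u hu' w hw).trans (mul_le_mul_of_nonneg_left hwu hMB0))
        (norm_nonneg _) hMψ
  have hsplit : YY 𝔹 ψ B u v - 𝔹 u v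
      = (∫ w in u..v, tens ((Phi ψ w - Phi ψ u) + (B w - B u)) (ψ w))
        + tens (Phi ψ v - Phi ψ u) (B v - B u) - ∫ w in u..v, tens (ψ w) (B w - B u) := by
    simp only [YY]; abel
  rw [hsplit, Real.rpow_one_add' (sub_nonneg.2 huv) (by linarith),
    ← abs_of_nonneg (sub_nonneg.2 huv)]
  calc _ ≤ (Mψ * T ^ (1 - α) + MB) * |v - u| ^ α * Mψ * |v - u|
          + Mψ * |v - u| * (MB * |v - u| ^ α) + Mψ * (MB * |v - u| ^ α) * |v - u| :=
        (norm_sub_le _ _).trans (add_le_add ((norm_add_le _ _).trans (add_le_add hI₁ hI₂)) hI₃)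
    _ = Mψ * (Mψ * T ^ (1 - α) + 3 * MB) * (|v - u| * |v - u| ^ α) := by ring

lemma norm_apply_Phi_sub_sub_integral_le (hψc : Continuous ψ) (hα : 0 < α) {Mψ MZ : ℝ}
    (hMZ0 : 0 ≤ MZ) (hψ : ∀ w ∈ Icc 0 T, ‖ψ w‖ ≤ Mψ)
    (hZ : ∀ s ∈ Icc 0 T, ∀ t ∈ Icc 0 T, ‖Z t - Z s‖ ≤ MZ * |t - s| ^ α)
    {u v : ℝ} (hu : 0 ≤ u) (huv : u ≤ v) (hv : v ≤ T) :
    ‖Z u (Phi ψ v - Phi ψ u) - ∫ w in u..v, Z w (ψ w)‖ ≤ MZ * Mψ * (v - u) ^ (1 + α) := by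
  have hu' : u ∈ Icc 0 T := ⟨hu, by linarith⟩
  have hv' : v ∈ Icc 0 T := ⟨by linarith, hv⟩
  have hZψ : IntervalIntegrable (fun w => Z w (ψ w)) MeasureTheory.volume u v :=
    (((continuousOn_of_holder hα hZ).clm_apply hψc.continuousOn).mono
      (uIcc_subset_Icc hu' hv')).intervalIntegrable
  have hZuψ : IntervalIntegrable (fun w => Z u (ψ w)) MeasureTheory.volume u v :=
    ((Z u).continuous.comp hψc).intervalIntegrable u v
  rw [Phi_sub hψc, ← ContinuousLinearMap.intervalIntegral_comp_comm _ (hψc.intervalIntegrable _ _),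
    ← intervalIntegral.integral_sub hZuψ hZψ,
    Real.rpow_one_add' (by linarith) (by linarith), ← abs_of_nonneg (sub_nonneg.2 huv)]
  rw [mul_comm |v - u|, ← mul_assoc]
  refine intervalIntegral.norm_integral_le_of_norm_le_const fun w hw => ?_
  have hw' := uIcc_subset_Icc hu' hv' (uIoc_subset_uIcc hw)
  rw [uIoc_of_le huv] at hw
  rw [← sub_apply, mul_right_comm]
  refine ((Z u - Z w).le_opNorm _).trans (mul_le_mul ((hZ w hw' u hu').trans ?_) (hψ w hw')
    (norm_nonneg _) (by positivity))
  rw [abs_sub_comm, abs_of_nonneg (sub_nonneg.2 huv), abs_of_pos (sub_pos.2 hw.1)]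
  gcongr
  · linarith [hw.1]
  · exact hw.2

lemma norm_compensatedGerm_translate_sub_le (hψc : Continuous ψ) (hα : 0 < α) (hα1 : α ≤ 1)
    {Mψ MB MZ NZ' : ℝ} (hMB0 : 0 ≤ MB) (hMZ0 : 0 ≤ MZ) (hψ : ∀ w ∈ Icc 0 T, ‖ψ w‖ ≤ Mψ)
    (hB : ∀ s ∈ Icc 0 T, ∀ t ∈ Icc 0 T, ‖B t - B s‖ ≤ MB * |t - s| ^ α)
    (hZ : ∀ s ∈ Icc 0 T, ∀ t ∈ Icc 0 T, ‖Z t - Z s‖ ≤ MZ * |t - s| ^ α)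
    (hZ' : ∀ s ∈ Icc 0 T, ‖Z' s‖ ≤ NZ') {u v : ℝ} (hu : 0 ≤ u) (huv : u ≤ v) (hv : v ≤ T) :
    ‖compensatedGerm Z Z' (fun t => Phi ψ t + B t) (YY 𝔹 ψ B) u v - compensatedGerm Z Z' B 𝔹 u v
        - ∫ w in u..v, Z w (ψ w)‖
      ≤ (MZ * Mψ + r * r * NZ' * (Mψ * (Mψ * T ^ (1 - α) + 3 * MB))) * (v - u) ^ (1 + α) := by
  have hsplit : compensatedGerm Z Z' (fun t => Phi ψ t + B t) (YY 𝔹 ψ B) u v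
        - compensatedGerm Z Z' B 𝔹 u v - ∫ w in u..v, Z w (ψ w)
      = (Z u (Phi ψ v - Phi ψ u) - ∫ w in u..v, Z w (ψ w))
        + bapp (Z' u) (YY 𝔹 ψ B u v - 𝔹 u v) := by
    rw [compensatedGerm, compensatedGerm, bapp_sub,
      show Phi ψ v + B v - (Phi ψ u + B u) = (Phi ψ v - Phi ψ u) + (B v - B u) by abel, map_add]
    abel
  have hu' : u ∈ Icc 0 T := ⟨hu, huv.trans hv⟩
  have hNZ'0 : 0 ≤ NZ' := (norm_nonneg (Z' u)).trans (hZ' u hu')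
  rw [hsplit, add_mul]
  refine (norm_add_le _ _).trans (add_le_add
    (norm_apply_Phi_sub_sub_integral_le hψc hα hMZ0 hψ hZ hu huv hv) ?_)
  calc _ ≤ r * r * ‖Z' u‖ * ‖YY 𝔹 ψ B u v - 𝔹 u v‖ := norm_bapp_le _ _
    _ ≤ r * r * NZ' * (Mψ * (Mψ * T ^ (1 - α) + 3 * MB) * (v - u) ^ (1 + α)) := by
        gcongr
        exacts [hZ' u hu', norm_YY_sub_le hψc hα hα1 hMB0 hψ hB hu huv hv]
    _ = _ := by ring

end Translation

theorem statement9_general (r d : ℕ) (T α : ℝ) (hT : 0 < T) (hα : α ∈ Set.Ioc (1/3 : ℝ) (1/2))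
    (B : ℝ → EuclideanSpace ℝ (Fin r))
    (𝔹 : ℝ → ℝ → EuclideanSpace ℝ (Fin r × Fin r))
    (hB : BddAbove (pairSet α 0 T (incr B)))
    (h𝔹 : BddAbove (pairSet (2*α) 0 T 𝔹))
    (hChen : Chen T B 𝔹)
    (ψ : ℝ → EuclideanSpace ℝ (Fin r)) (hψc : Continuous ψ)
    (Z : ℝ → (EuclideanSpace ℝ (Fin r) →L[ℝ] EuclideanSpace ℝ (Fin d)))
    (Z' : ℝ → (EuclideanSpace ℝ (Fin r) →L[ℝ]
        (EuclideanSpace ℝ (Fin r) →L[ℝ] EuclideanSpace ℝ (Fin d))))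
    (hZ : BddAbove (pairSet α 0 T (incr Z)))
    (hZ' : BddAbove (pairSet α 0 T (incr Z')))
    (hRZ : BddAbove (pairSet (2*α) 0 T (fun s t => Z t - Z s - Z' s (B t - B s)))) :
    BddAbove (pairSet (2*α) 0 T
      (fun s t => Z t - Z s - Z' s ((Phi ψ t + B t) - (Phi ψ s + B s)))) ∧
    ∃ IB IY : EuclideanSpace ℝ (Fin d),
      RSConv 0 T (fun u v => Z u (B v - B u) + bapp (Z' u) (𝔹 u v)) IB ∧
      RSConv 0 T (fun u v =>
        Z u ((Phi ψ v + B v) - (Phi ψ u + B u)) + bapp (Z' u) (YY 𝔹 ψ B u v)) IY ∧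
      IY = (∫ s in (0:ℝ)..T, Z s (ψ s)) + IB := by
  obtain ⟨hα₁, hα₂⟩ := hα
  have hα0 : 0 < α := by linarith
  obtain ⟨MB, hMB0, hMB⟩ := exists_holder_bound hB hα0 fun s _ => sub_self (B s)
  obtain ⟨M𝔹, hM𝔹0, hM𝔹⟩ := exists_holder_bound h𝔹 (by linarith) hChen.apply_self
  obtain ⟨MZ, hMZ0, hMZ⟩ := exists_holder_bound hZ hα0 fun s _ => sub_self (Z s)
  obtain ⟨MZ', hMZ'0, hMZ'⟩ := exists_holder_bound hZ' hα0 fun s _ => sub_self (Z' s)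
  obtain ⟨MR, hMR0, hMR⟩ := exists_holder_bound hRZ (by linarith) fun s _ => by simp
  obtain ⟨Mψ, hMψ⟩ := isCompact_Icc.exists_bound_of_continuousOn hψc.continuousOn
  obtain ⟨NZ', hNZ'⟩ :=
    isCompact_Icc.exists_bound_of_continuousOn (f := Z') (continuousOn_of_holder hα0 hMZ')
  have hMψ0 : 0 ≤ Mψ := (norm_nonneg (ψ 0)).trans (hMψ 0 ⟨le_rfl, hT.le⟩)
  have hNZ'0 : 0 ≤ NZ' := (norm_nonneg (Z' 0)).trans (hNZ' 0 ⟨le_rfl, hT.le⟩)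
  refine ⟨bddAbove_pairSet_of_le (norm_controlled_translate_le hψc (by linarith) hMψ hNZ' hMR),
    ?_⟩
  obtain ⟨IB, hIB⟩ := exists_rsConv_of_defectBound hT (by positivity) (by linarith)
    (defectBound_compensatedGerm hChen hα0 hMB0 hM𝔹0 hMZ'0 hMR0 hMB hM𝔹 hMZ' hMR)
  refine ⟨IB, (∫ s in (0:ℝ)..T, Z s (ψ s)) + IB, hIB, ?_, rfl⟩
  have hRem := rsConv_zero_of_norm_le (by positivity) (by linarith : (1 : ℝ) < 1 + α)
    fun u v hu huv hv => norm_compensatedGerm_translate_sub_le (𝔹 := 𝔹) (Z' := Z') hψc hα0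
      (by linarith) hMB0 hMZ0 hMψ hMB hMZ hNZ' hu huv hv
  convert (hIB.add (rsConv_intervalIntegral ((continuousOn_of_holder hα0 hMZ).clm_apply
    hψc.continuousOn))).add hRem using 1
  · funext u v
    rw [sub_sub]
    exact (add_sub_cancel _ _).symm
  · rw [add_zero, add_comm]

/-- a path `(Z,Z')` controlled by `B` is also controlled by
the translated path `Y = Φ + B`, both rough integrals `∫₀ᵀ Z dB` (against
`(B,𝔹)`) and `∫₀ᵀ Z dY` (against `(Y,𝕐)`) exist as limits of compensated
Riemann sums, and `∫₀ᵀ Z dY = ∫₀ᵀ Z ψ ds + ∫₀ᵀ Z dB`. -/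
theorem statement9 (r d : ℕ) (T α : ℝ) (hT : 0 < T) (hα : α ∈ Set.Ioc (1/3 : ℝ) (1/2))
    (B : ℝ → EuclideanSpace ℝ (Fin r))
    (𝔹 : ℝ → ℝ → EuclideanSpace ℝ (Fin r × Fin r))
    (hB : BddAbove (pairSet α 0 T (incr B)))
    (h𝔹 : BddAbove (pairSet (2*α) 0 T 𝔹))
    (hChen : Chen T B 𝔹)
    (ψ : ℝ → EuclideanSpace ℝ (Fin r)) (hψc : Continuous ψ)
    (Mψ : ℝ) (hψ : ∀ u ∈ Set.Icc (0:ℝ) T, ‖ψ u‖ ≤ Mψ)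
    (Z : ℝ → (EuclideanSpace ℝ (Fin r) →L[ℝ] EuclideanSpace ℝ (Fin d)))
    (Z' : ℝ → (EuclideanSpace ℝ (Fin r) →L[ℝ]
        (EuclideanSpace ℝ (Fin r) →L[ℝ] EuclideanSpace ℝ (Fin d))))
    (hZ : BddAbove (pairSet α 0 T (incr Z)))
    (hZ' : BddAbove (pairSet α 0 T (incr Z')))
    (hRZ : BddAbove (pairSet (2*α) 0 T (fun s t => Z t - Z s - Z' s (B t - B s)))) :
    BddAbove (pairSet (2*α) 0 T
      (fun s t => Z t - Z s - Z' s ((Phi ψ t + B t) - (Phi ψ s + B s)))) ∧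
    ∃ IB IY : EuclideanSpace ℝ (Fin d),
      RSConv 0 T (fun u v => Z u (B v - B u) + bapp (Z' u) (𝔹 u v)) IB ∧
      RSConv 0 T (fun u v =>
        Z u ((Phi ψ v + B v) - (Phi ψ u + B u)) + bapp (Z' u) (YY 𝔹 ψ B u v)) IY ∧
      IY = (∫ s in (0:ℝ)..T, Z s (ψ s)) + IB :=
  statement9_general r d T α hT hα B 𝔹 hB h𝔹 hChen ψ hψc Z Z' hZ hZ' hRZ
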